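/- arXiv:1503.08175 — 3 statements merged into one kernel-verified Lean document; each statement's English description precedes it below -/
import Mathlib

section
/- Let G = (V,E) be a rooted directed graph in which every vertex has at least two outgoing neighbors. Then the root set V_r of G has cardinality at least 3. -/
/-- `i` is a root if every vertex has a directed path to `i`. -/
def IsRoot {V : Type*} (Adj : V → V → Prop) (i : V) : Prop :=
  ∀ j : V, Relation.ReflTransGen Adj j i

theorem IsRoot.of_adj {V : Type*} {Adj : V → V → Prop} {r a : V} (hr : IsRoot Adj r)
    (hra : Adj r a) : IsRoot Adj a :=
  fun j => (hr j).tail hra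

theorem IsRoot.card_outNeighbors_lt_ncard {V : Type*} [Fintype V] {Adj : V → V → Prop}
    [DecidableRel Adj] {r : V} (hr : IsRoot Adj r) (hrr : ¬ Adj r r) :
    (Finset.univ.filter (fun w => Adj r w)).card < Set.ncard {v | IsRoot Adj v} := by
  classical
  set N := Finset.univ.filter (fun w => Adj r w)
  have hsub : (↑(insert r N) : Set V) ⊆ {v | IsRoot Adj v} := by
    intro v hv
    rcases Finset.mem_insert.mp hv with rfl | hv
    · exact hr
    · exact hr.of_adj (Finset.mem_filter.mp hv).2
  calc N.card < (insert r N).card := by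
        rw [Finset.card_insert_of_notMem fun h => hrr (Finset.mem_filter.mp h).2]
        exact Nat.lt_succ_self _
    _ = Set.ncard (↑(insert r N) : Set V) := (Set.ncard_coe_finset _).symm
    _ ≤ Set.ncard {v | IsRoot Adj v} := Set.ncard_le_ncard hsub

theorem stmt_3_general {V : Type*} [Fintype V]
    (Adj : V → V → Prop) [DecidableRel Adj]
    (hsimple : ∀ v, ¬ Adj v v)
    (hrooted : ∃ r, IsRoot Adj r)
    (hdeg : ∀ v, 2 ≤ (Finset.univ.filter (fun w => Adj v w)).card) :
    3 ≤ Set.ncard {v | IsRoot Adj v} := by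
  obtain ⟨r, hr⟩ := hrooted
  exact lt_of_le_of_lt (hdeg r) (hr.card_outNeighbors_lt_ncard (hsimple r))

theorem stmt_3 {V : Type*} [Fintype V] [DecidableEq V]
    (Adj : V → V → Prop) [DecidableRel Adj]
    (hsimple : ∀ v, ¬ Adj v v)
    (hrooted : ∃ r, IsRoot Adj r)
    (hdeg : ∀ v, 2 ≤ (Finset.univ.filter (fun w => Adj v w)).card) :
    3 ≤ Set.ncard {v | IsRoot Adj v} :=
  stmt_3_general Adj hsimple hrooted hdeg
end

section
/- Let k ≥ 3 and let v_1 ≥ v_2 ≥ ... ≥ v_k > 0 with Σ_{i=1}^k v_i = 1 and v_i ≤ 1/3 for all i. Set μ₁ := 1/(4v_1) and x_i := (1/2)(1 - √(1 - 4μ₁ v_i)) for each i. Then Σ_{i=1}^k x_i > 1. -/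
open Finset

lemma sqrt_one_sub_lt_one_sub_half {u : ℝ} (hu0 : 0 < u) (hu1 : u ≤ 1) :
    √(1 - u) < 1 - u / 2 :=
  (Real.sqrt_lt' (by linarith)).2 (by nlinarith)

lemma quarter_lt_half_one_sub_sqrt_one_sub {u : ℝ} (hu0 : 0 < u) (hu1 : u ≤ 1) :
    u / 4 < 1 / 2 * (1 - √(1 - u)) := by
  linarith [sqrt_one_sub_lt_one_sub_half hu0 hu1]

/-- The largest term contributes exactly `1/2`; each other term `x_i` strictly exceeds
`v i / (4 v i₀)`, and these add up to `(1 - v i₀) / (4 v i₀) ≥ 1/2` because `v i₀ ≤ 1/3`. -/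
theorem one_lt_sum_half_one_sub_sqrt_one_sub_div_max {ι : Type*} [Fintype ι] [DecidableEq ι]
    (v : ι → ℝ) (i₀ : ι) (hpos : ∀ i, 0 < v i) (hle : ∀ i, v i ≤ v i₀)
    (hsum : ∑ i, v i = 1) (hbd : v i₀ ≤ 1 / 3) (hnt : (univ.erase i₀).Nonempty) :
    1 < ∑ i, 1 / 2 * (1 - √(1 - v i / v i₀)) := by
  have ha := hpos i₀
  have hmax : 1 / 2 * (1 - √(1 - v i₀ / v i₀)) = 1 / 2 := by
    simp [div_self ha.ne']
  have hrest : ∑ i ∈ univ.erase i₀, v i / v i₀ / 4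
      < ∑ i ∈ univ.erase i₀, 1 / 2 * (1 - √(1 - v i / v i₀)) :=
    sum_lt_sum_of_nonempty hnt fun i _ =>
      quarter_lt_half_one_sub_sqrt_one_sub (div_pos (hpos i) ha) ((div_le_one ha).2 (hle i))
  have hlin : ∑ i ∈ univ.erase i₀, v i / v i₀ / 4 = (1 - v i₀) / (4 * v i₀) := by
    rw [← sum_div, ← sum_div, sum_erase_eq_sub (mem_univ i₀), hsum, div_div, mul_comm]
  have hhalf : 1 / 2 ≤ (1 - v i₀) / (4 * v i₀) := by
    rw [le_div_iff₀ (by positivity)]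
    linarith
  rw [← add_sum_erase _ _ (mem_univ i₀), hmax]
  linarith

theorem stmt_11 (k : ℕ) (hk : 3 ≤ k) (v : Fin k → ℝ)
    (hpos : ∀ i, 0 < v i)
    (hmono : ∀ i j : Fin k, i ≤ j → v j ≤ v i)
    (hsum : ∑ i, v i = 1)
    (hbd : ∀ i, v i ≤ 1/3) :
    1 < ∑ i, (1/2) *
      (1 - Real.sqrt (1 - 4 * (1 / (4 * v ⟨0, by omega⟩)) * v i)) := by
  set i₀ : Fin k := ⟨0, by omega⟩
  have hnt : (univ.erase i₀).Nonempty := ⟨⟨1, by omega⟩, by simp [i₀, Fin.ext_iff]⟩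
  have hrw : ∀ i, 1 - 4 * (1 / (4 * v i₀)) * v i = 1 - v i / v i₀ := fun i => by
    field_simp [(hpos i₀).ne']
  simp only [hrw]
  exact one_lt_sum_half_one_sub_sqrt_one_sub_div_max v i₀ hpos
    (fun i => hmono i₀ i (Nat.zero_le _)) hsum (hbd i₀) hnt
end

section
/- Let n ≥ 3, α := 1/2 - 1/(4(2n-3)), Q := {x in the unit simplex of ℝ^n : x_i ≤ α for all i}, and let V_r ⊆ {1,...,n} with |V_r| ≥ 3, Q_r := {x ∈ Q : x_i = 0 for all i ∉ V_r}. If x ∈ Q satisfies Σ_{i∉V_r} x_i ≤ ε for some ε ≤ 1/4, then there exists x' ∈ Q_r with Σ_{i=1}^n |x_i - x'_i| ≤ 2ε. -/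
/-!
Off `V_r` move all mass to `0`, and on `V_r` raise every coordinate the same fraction `t` of the
way up to the cap `α`. The room `Σ_{i ∈ V_r} (α - x_i)` below the cap is at least `1/4 ≥ ε`, so
`t = s / Σ_{i ∈ V_r} (α - x_i) ≤ 1` with `s = Σ_{i ∉ V_r} x_i` keeps the total mass at `1`, the
coordinates below `α`, and costs exactly `s` on each side of `V_r` in `ℓ¹`.
-/

open Finset

namespace CappedSimplex

variable {ι : Type*} [DecidableEq ι]

def raiseOn (V : Finset ι) (α t : ℝ) (x : ι → ℝ) (i : ι) : ℝ :=
  if i ∈ V then x i + t * (α - x i) else 0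

variable {V : Finset ι} {α t : ℝ} {x : ι → ℝ}

theorem raiseOn_of_notMem {i : ι} (hi : i ∉ V) : raiseOn V α t x i = 0 := if_neg hi

theorem raiseOn_nonneg (hx0 : ∀ i, 0 ≤ x i) (hxα : ∀ i, x i ≤ α) (ht : 0 ≤ t) (i : ι) :
    0 ≤ raiseOn V α t x i := by
  unfold raiseOn
  split_ifs
  · nlinarith [hx0 i, hxα i]
  · exact le_rfl

theorem raiseOn_le (hx0 : ∀ i, 0 ≤ x i) (hxα : ∀ i, x i ≤ α) (ht : t ≤ 1) (i : ι) :
    raiseOn V α t x i ≤ α := by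
  unfold raiseOn
  split_ifs
  · nlinarith [hxα i]
  · exact (hx0 i).trans (hxα i)

variable [Fintype ι]

theorem sum_raiseOn :
    ∑ i, raiseOn V α t x i = ∑ i ∈ V, x i + t * ∑ i ∈ V, (α - x i) := by
  simp only [raiseOn, sum_ite_mem, univ_inter, mul_sum, sum_add_distrib]

theorem sum_abs_sub_raiseOn (hx0 : ∀ i, 0 ≤ x i) (hxα : ∀ i, x i ≤ α) (ht : 0 ≤ t) :
    ∑ i, |x i - raiseOn V α t x i| = ∑ i ∈ univ \ V, x i + t * ∑ i ∈ V, (α - x i) := by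
  rw [← sum_sdiff (subset_univ V), mul_sum]
  congr 1
  · refine sum_congr rfl fun i hi => ?_
    rw [raiseOn_of_notMem (mem_sdiff.1 hi).2, sub_zero, abs_of_nonneg (hx0 i)]
  · refine sum_congr rfl fun i hi => ?_
    rw [raiseOn, if_pos hi, sub_add_cancel_left, abs_neg,
      abs_of_nonneg (mul_nonneg ht (sub_nonneg.2 (hxα i)))]

theorem exists_supported_of_sum_compl_le (hx0 : ∀ i, 0 ≤ x i) (hxα : ∀ i, x i ≤ α)
    (hroom : ∑ i ∈ univ \ V, x i ≤ ∑ i ∈ V, (α - x i)) :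
    ∃ x' : ι → ℝ, (∀ i, 0 ≤ x' i) ∧ ∑ i, x' i = ∑ i, x i ∧ (∀ i, x' i ≤ α) ∧
      (∀ i ∉ V, x' i = 0) ∧ ∑ i, |x i - x' i| = 2 * ∑ i ∈ univ \ V, x i := by
  set s := ∑ i ∈ univ \ V, x i
  set T := ∑ i ∈ V, (α - x i)
  have hs : 0 ≤ s := sum_nonneg fun i _ => hx0 i
  have ht0 : 0 ≤ s / T := div_nonneg hs (hs.trans hroom)
  have hTt : T * (s / T) = s := by
    rcases (hs.trans hroom).eq_or_lt with hT | hT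
    · rw [← hT, zero_mul]; linarith
    · exact mul_div_cancel₀ s hT.ne'
  refine ⟨raiseOn V α (s / T) x, raiseOn_nonneg hx0 hxα ht0,
    ?_, raiseOn_le hx0 hxα (div_le_one_of_le₀ hroom (hs.trans hroom)),
    fun i hi => raiseOn_of_notMem hi, ?_⟩
  · rw [sum_raiseOn, mul_comm, hTt, ← sum_sdiff (subset_univ V), add_comm]
  · rw [sum_abs_sub_raiseOn hx0 hxα ht0, mul_comm, hTt, two_mul]

end CappedSimplex

theorem five_twelfths_le_cap {n : ℝ} (hn : 3 ≤ n) : 5 / 12 ≤ 1 / 2 - 1 / (4 * (2 * n - 3)) := by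
  have : 1 / (4 * (2 * n - 3)) ≤ 1 / 12 := one_div_le_one_div_of_le (by norm_num) (by linarith)
  linarith

theorem stmt_15_general (n : ℕ) (Vr : Finset (Fin n)) (hVr : 3 ≤ Vr.card)
    (x : Fin n → ℝ) (hx0 : ∀ i, 0 ≤ x i) (hx1 : ∑ i, x i = 1)
    (hxα : ∀ i, x i ≤ 1/2 - 1 / (4 * (2 * (n : ℝ) - 3)))
    (ε : ℝ) (hε : ε ≤ 1/4)
    (hsum : ∑ i ∈ Finset.univ \ Vr, x i ≤ ε) :
    ∃ x' : Fin n → ℝ, (∀ i, 0 ≤ x' i) ∧ (∑ i, x' i = 1) ∧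
      (∀ i, x' i ≤ 1/2 - 1 / (4 * (2 * (n : ℝ) - 3))) ∧
      (∀ i ∉ Vr, x' i = 0) ∧
      ∑ i, |x i - x' i| ≤ 2 * ε := by
  set α : ℝ := 1/2 - 1 / (4 * (2 * (n : ℝ) - 3))
  have hn : (3 : ℝ) ≤ n := by exact_mod_cast hVr.trans (by simpa using card_le_univ Vr)
  have hcard : (3 : ℝ) ≤ Vr.card := by exact_mod_cast hVr
  have hα : 5 / 12 ≤ α := five_twelfths_le_cap hn
  have hVx : ∑ i ∈ Vr, x i ≤ 1 :=
    hx1 ▸ sum_le_sum_of_subset_of_nonneg (subset_univ Vr) fun i _ _ => hx0 i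
  -- `Σ_{i ∈ V_r} (α - x_i) ≥ 3α - 1 ≥ 1/4`
  have hroom : ∑ i ∈ univ \ Vr, x i ≤ ∑ i ∈ Vr, (α - x i) := by
    rw [sum_sub_distrib, sum_const, nsmul_eq_mul]
    linarith [mul_le_mul_of_nonneg_right hcard (by linarith : (0 : ℝ) ≤ α)]
  obtain ⟨x', hx'0, hx'1, hx'α, hx'V, hdist⟩ :=
    CappedSimplex.exists_supported_of_sum_compl_le hx0 hxα hroom
  exact ⟨x', hx'0, hx'1.trans hx1, hx'α, hx'V, hdist ▸ by linarith⟩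

theorem stmt_15 (n : ℕ) (hn : 3 ≤ n) (Vr : Finset (Fin n)) (hVr : 3 ≤ Vr.card)
    (x : Fin n → ℝ) (hx0 : ∀ i, 0 ≤ x i) (hx1 : ∑ i, x i = 1)
    (hxα : ∀ i, x i ≤ 1/2 - 1 / (4 * (2 * (n : ℝ) - 3)))
    (ε : ℝ) (hε : ε ≤ 1/4)
    (hsum : ∑ i ∈ Finset.univ \ Vr, x i ≤ ε) :
    ∃ x' : Fin n → ℝ, (∀ i, 0 ≤ x' i) ∧ (∑ i, x' i = 1) ∧
      (∀ i, x' i ≤ 1/2 - 1 / (4 * (2 * (n : ℝ) - 3))) ∧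
      (∀ i ∉ Vr, x' i = 0) ∧
      ∑ i, |x i - x' i| ≤ 2 * ε :=
  stmt_15_general n Vr hVr x hx0 hx1 hxα ε hε hsum
end
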